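/- For a random variable ε = tanh(y/σ²) with y ~ N(1, σ²), as σ → ∞ both E[ε] and E[ε²] are asymptotic to σ^{−2}: E[ε] ~ σ^{−2} and E[ε²] ~ σ^{−2}. -/

import Mathlib

open MeasureTheory ProbabilityTheory Real Filter Topology

/-!
Write `y = σ z + 1` with `z` standard normal and `u = (σ z + 1) / σ²`. Since `E[z] = 0`,
`σ² E[tanh u] = E[σ² tanh u - σ z]`, and `σ² tanh u - σ z = 1 + σ² (tanh u - u)`, where
`|tanh u - u| ≤ |u|³ / 3` and `σ |u| ≤ 1 + |z|` make the error at most `(1 + |z|)³ / (3σ)`.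
Dominated convergence gives the limit `1`. Similarly `σ² tanh² u ≤ (σ u)² ≤ (1 + |z|)²` and
`σ tanh u → z`, so `σ² E[tanh² u] → E[z²] = 1`.
-/

theorem apply_zero_le_of_hasDerivAt_nonneg {f f' : ℝ → ℝ} (hf : ∀ x, HasDerivAt f (f' x) x)
    (hf' : ∀ x, 0 ≤ x → 0 ≤ f' x) {x : ℝ} (hx : 0 ≤ x) : f 0 ≤ f x := by
  have hmono : MonotoneOn f (Set.Ici 0) := by
    refine monotoneOn_of_hasDerivWithinAt_nonneg (convex_Ici 0)
      (fun y _ => (hf y).continuousAt.continuousWithinAt)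
      (fun y _ => (hf y).hasDerivWithinAt) fun y hy => hf' y ?_
    rw [interior_Ici] at hy
    exact hy.le
  exact hmono Set.self_mem_Ici hx hx

namespace Real

theorem hasDerivAt_tanh (x : ℝ) : HasDerivAt tanh (1 - tanh x ^ 2) x := by
  have h := (hasDerivAt_sinh x).div (hasDerivAt_cosh x) (cosh_pos x).ne'
  rw [show tanh = fun y => sinh y / cosh y from funext tanh_eq_sinh_div_cosh]
  refine h.congr_deriv ?_
  field_simp

@[fun_prop]
theorem continuous_tanh : Continuous tanh :=
  continuous_iff_continuousAt.2 fun x => (hasDerivAt_tanh x).continuousAt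

theorem tanh_nonneg {x : ℝ} (hx : 0 ≤ x) : 0 ≤ tanh x := by
  rw [tanh_eq_sinh_div_cosh]
  exact div_nonneg (sinh_nonneg_iff.2 hx) (cosh_pos x).le

theorem tanh_le_self {x : ℝ} (hx : 0 ≤ x) : tanh x ≤ x := by
  have := apply_zero_le_of_hasDerivAt_nonneg (f := fun y => y - tanh y)
    (f' := fun y => tanh y ^ 2)
    (fun y => ((hasDerivAt_id y).sub (hasDerivAt_tanh y)).congr_deriv (by ring))
    (fun y _ => sq_nonneg (tanh y)) hx
  simp only [tanh_zero, sub_zero] at this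
  linarith

theorem self_sub_tanh_le {x : ℝ} (hx : 0 ≤ x) : x - tanh x ≤ x ^ 3 / 3 := by
  have := apply_zero_le_of_hasDerivAt_nonneg (f := fun y => y ^ 3 / 3 - y + tanh y)
    (f' := fun y => y ^ 2 - tanh y ^ 2)
    (fun y => ((((hasDerivAt_pow 3 y).div_const 3).sub (hasDerivAt_id y)).add
      (hasDerivAt_tanh y)).congr_deriv (by ring))
    (fun y hy => by nlinarith [tanh_nonneg hy, tanh_le_self hy]) hx
  simp only [tanh_zero] at this
  linarith

theorem abs_tanh_le_abs (x : ℝ) : |tanh x| ≤ |x| := by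
  wlog hx : 0 ≤ x generalizing x
  · simpa [tanh_neg] using this (-x) (by linarith)
  rw [abs_of_nonneg hx, abs_of_nonneg (tanh_nonneg hx)]
  exact tanh_le_self hx

theorem abs_tanh_sub_self_le (x : ℝ) : |tanh x - x| ≤ |x| ^ 3 / 3 := by
  wlog hx : 0 ≤ x generalizing x
  · have := this (-x) (by linarith)
    rwa [tanh_neg, abs_neg, ← neg_add', abs_neg, ← sub_eq_add_neg] at this
  rw [abs_of_nonpos (by linarith [tanh_le_self hx]), abs_of_nonneg hx, neg_sub]
  exact self_sub_tanh_le hx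

end Real

namespace ProbabilityTheory

theorem gaussianReal_map_const_mul_add (μ σ : ℝ) :
    (gaussianReal 0 1).map (fun z => σ * z + μ) = gaussianReal μ (σ ^ 2).toNNReal := by
  rw [show (fun z => σ * z + μ) = (fun y => y + μ) ∘ (fun z => σ * z) from rfl,
    ← Measure.map_map (measurable_add_const μ) (measurable_const_mul σ),
    gaussianReal_map_const_mul, gaussianReal_map_add_const, mul_zero, zero_add]
  congr 1
  ext
  simp [sq_nonneg σ]

theorem integral_gaussianReal_eq_integral_std (μ σ : ℝ) {f : ℝ → ℝ} (hf : Continuous f) :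
    ∫ y, f y ∂gaussianReal μ (σ ^ 2).toNNReal = ∫ z, f (σ * z + μ) ∂gaussianReal 0 1 := by
  rw [← gaussianReal_map_const_mul_add,
    integral_map (by fun_prop) hf.aestronglyMeasurable]

theorem integrable_one_add_abs_pow_gaussianReal (μ : ℝ) (v : NNReal) (n : ℕ) :
    Integrable (fun z : ℝ => (1 + |z|) ^ n) (gaussianReal μ v) := by
  have h : MemLp (fun z : ℝ => 1 + |z|) n (gaussianReal μ v) := by
    have := (memLp_const (1 : ℝ)).add (memLp_id_gaussianReal (μ := μ) (v := v) n).norm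
    exact_mod_cast this
  refine h.integrable_norm_pow'.congr (ae_of_all _ fun z => ?_)
  simp only [Real.norm_eq_abs, abs_of_nonneg (by positivity : (0 : ℝ) ≤ 1 + |z|)]

theorem integral_sq_gaussianReal_zero (v : NNReal) :
    ∫ z, z ^ 2 ∂gaussianReal 0 v = v := by
  have := variance_eq_integral (X := id) (μ := gaussianReal 0 v) aemeasurable_id
  simpa [variance_id_gaussianReal, integral_id_gaussianReal] using this.symm

end ProbabilityTheory

section Asymptotics

variable {σ : ℝ}

theorem mul_abs_div_sq_le (hσ : 1 ≤ σ) (z : ℝ) : σ * |(σ * z + 1) / σ ^ 2| ≤ 1 + |z| := by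
  have hσ0 : 0 < σ := by linarith
  have hnum : |σ * z + 1| ≤ σ * |z| + 1 := by
    simpa [abs_mul, abs_of_pos hσ0] using abs_add_le (σ * z) 1
  rw [abs_div, abs_of_pos (by positivity : 0 < σ ^ 2), mul_div_assoc', div_le_iff₀ (by positivity)]
  nlinarith [abs_nonneg z]

theorem sq_mul_abs_tanh_sub_le (hσ : 1 ≤ σ) (z : ℝ) :
    σ ^ 2 * |tanh ((σ * z + 1) / σ ^ 2) - (σ * z + 1) / σ ^ 2| ≤ (1 + |z|) ^ 3 / (3 * σ) := by
  have hσ0 : 0 < σ := by linarith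
  set u := (σ * z + 1) / σ ^ 2
  have hu : (σ * |u|) ^ 3 ≤ (1 + |z|) ^ 3 :=
    pow_le_pow_left₀ (by positivity) (mul_abs_div_sq_le hσ z) 3
  rw [le_div_iff₀ (by positivity)]
  calc σ ^ 2 * |tanh u - u| * (3 * σ) = 3 * σ ^ 3 * |tanh u - u| := by ring
    _ ≤ 3 * σ ^ 3 * (|u| ^ 3 / 3) := by gcongr; exact abs_tanh_sub_self_le u
    _ = (σ * |u|) ^ 3 := by ring
    _ ≤ (1 + |z|) ^ 3 := hu

theorem sq_mul_tanh_sq_le (hσ : 1 ≤ σ) (z : ℝ) :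
    σ ^ 2 * tanh ((σ * z + 1) / σ ^ 2) ^ 2 ≤ (1 + |z|) ^ 2 := by
  set u := (σ * z + 1) / σ ^ 2
  calc σ ^ 2 * tanh u ^ 2 ≤ σ ^ 2 * u ^ 2 :=
        mul_le_mul_of_nonneg_left (sq_le_sq.2 (abs_tanh_le_abs u)) (sq_nonneg σ)
    _ = (σ * |u|) ^ 2 := by rw [mul_pow, sq_abs]
    _ ≤ (1 + |z|) ^ 2 := pow_le_pow_left₀ (by positivity) (mul_abs_div_sq_le hσ z) 2

theorem sq_mul_tanh_sub_mul_eq (hσ : σ ≠ 0) (z : ℝ) :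
    σ ^ 2 * tanh ((σ * z + 1) / σ ^ 2) - σ * z
      = σ ^ 2 * (tanh ((σ * z + 1) / σ ^ 2) - (σ * z + 1) / σ ^ 2) + 1 := by
  field_simp
  ring

theorem abs_sq_mul_tanh_sub_mul_le (hσ : 1 ≤ σ) (z : ℝ) :
    |σ ^ 2 * tanh ((σ * z + 1) / σ ^ 2) - σ * z| ≤ (1 + |z|) ^ 3 / 3 + 1 := by
  have hσ0 : 0 < σ := by linarith
  rw [sq_mul_tanh_sub_mul_eq hσ0.ne']
  calc _ ≤ σ ^ 2 * |tanh ((σ * z + 1) / σ ^ 2) - (σ * z + 1) / σ ^ 2| + 1 :=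
        (abs_add_le _ _).trans_eq (by rw [abs_mul, abs_of_nonneg (sq_nonneg σ), abs_one])
    _ ≤ (1 + |z|) ^ 3 / (3 * σ) + 1 := by gcongr; exact sq_mul_abs_tanh_sub_le hσ z
    _ ≤ (1 + |z|) ^ 3 / 3 + 1 := by gcongr; linarith

theorem tendsto_sq_mul_tanh_sub_mul (z : ℝ) :
    Tendsto (fun σ : ℝ => σ ^ 2 * tanh ((σ * z + 1) / σ ^ 2) - σ * z) atTop (𝓝 1) := by
  have herr : Tendsto (fun σ : ℝ =>
      σ ^ 2 * (tanh ((σ * z + 1) / σ ^ 2) - (σ * z + 1) / σ ^ 2)) atTop (𝓝 0) := by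
    refine squeeze_zero_norm' (a := fun σ => (1 + |z|) ^ 3 / 3 / σ) ?_
      (tendsto_const_nhds.div_atTop tendsto_id)
    filter_upwards [eventually_ge_atTop 1] with σ hσ
    rw [Real.norm_eq_abs, abs_mul, abs_of_nonneg (sq_nonneg σ), div_div]
    exact sq_mul_abs_tanh_sub_le hσ z
  refine Tendsto.congr' ?_ (by simpa using herr.add_const 1)
  filter_upwards [eventually_gt_atTop 0] with σ hσ
  exact (sq_mul_tanh_sub_mul_eq hσ.ne' z).symm

theorem tendsto_sq_mul_tanh_sq (z : ℝ) :
    Tendsto (fun σ : ℝ => σ ^ 2 * tanh ((σ * z + 1) / σ ^ 2) ^ 2) atTop (𝓝 (z ^ 2)) := by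
  -- `σ * tanh u = z + (σ ^ 2 * tanh u - σ * z) / σ`, and the numerator tends to `1`
  have hmul : Tendsto (fun σ : ℝ => σ * tanh ((σ * z + 1) / σ ^ 2)) atTop (𝓝 z) := by
    have := ((tendsto_sq_mul_tanh_sub_mul z).div_atTop tendsto_id).const_add z
    rw [add_zero] at this
    refine this.congr' ?_
    filter_upwards [eventually_gt_atTop 0] with σ hσ
    simp only [id]
    field_simp
    ring
  simpa [mul_pow] using hmul.pow 2

end Asymptotics

theorem tendsto_integral_sq_mul_tanh_sub_mul :
    Tendsto (fun σ : ℝ => ∫ z, σ ^ 2 * tanh ((σ * z + 1) / σ ^ 2) - σ * z ∂gaussianReal 0 1)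
      atTop (𝓝 1) := by
  have h := tendsto_integral_filter_of_dominated_convergence (μ := gaussianReal 0 1)
    (F := fun σ z => σ ^ 2 * tanh ((σ * z + 1) / σ ^ 2) - σ * z) (f := fun _ => 1)
    (fun z => (1 + |z|) ^ 3 / 3 + 1)
    (Eventually.of_forall fun σ => by fun_prop)
    (by
      filter_upwards [eventually_ge_atTop 1] with σ hσ
      exact ae_of_all _ fun z => abs_sq_mul_tanh_sub_mul_le hσ z)
    (((integrable_one_add_abs_pow_gaussianReal 0 1 3).div_const 3).add (integrable_const 1))
    (ae_of_all _ tendsto_sq_mul_tanh_sub_mul)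
  simpa using h

theorem tendsto_integral_sq_mul_tanh_sq :
    Tendsto (fun σ : ℝ => ∫ z, σ ^ 2 * tanh ((σ * z + 1) / σ ^ 2) ^ 2 ∂gaussianReal 0 1)
      atTop (𝓝 1) := by
  have h := tendsto_integral_filter_of_dominated_convergence (μ := gaussianReal 0 1)
    (F := fun σ z => σ ^ 2 * tanh ((σ * z + 1) / σ ^ 2) ^ 2) (f := fun z => z ^ 2)
    (fun z => (1 + |z|) ^ 2)
    (Eventually.of_forall fun σ => by fun_prop)
    (by
      filter_upwards [eventually_ge_atTop 1] with σ hσ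
      refine ae_of_all _ fun z => ?_
      rw [Real.norm_eq_abs, abs_of_nonneg (by positivity)]
      exact sq_mul_tanh_sq_le hσ z)
    (integrable_one_add_abs_pow_gaussianReal 0 1 2)
    (ae_of_all _ tendsto_sq_mul_tanh_sq)
  rwa [integral_sq_gaussianReal_zero, NNReal.coe_one] at h

theorem integral_sq_mul_tanh_sub_mul (σ : ℝ) :
    ∫ z, σ ^ 2 * tanh ((σ * z + 1) / σ ^ 2) - σ * z ∂gaussianReal 0 1
      = σ ^ 2 * ∫ y, tanh (y / σ ^ 2) ∂gaussianReal 1 (σ ^ 2).toNNReal := by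
  have hint : Integrable (fun z => tanh ((σ * z + 1) / σ ^ 2)) (gaussianReal 0 1) :=
    Integrable.of_bound (by fun_prop) 1
      (ae_of_all _ fun z => (abs_tanh_lt_one _).le)
  have hid : Integrable (fun z : ℝ => σ * z) (gaussianReal 0 1) :=
    IsGaussian.integrable_id.const_mul σ
  rw [integral_sub (hint.const_mul _) hid,
    integral_const_mul, integral_const_mul, integral_id_gaussianReal, mul_zero, sub_zero,
    integral_gaussianReal_eq_integral_std 1 σ (f := fun y => tanh (y / σ ^ 2)) (by fun_prop)]

/-- for `ε = tanh(y/σ²)` with `y ~ N(1,σ²)`, both `E[ε]` and `E[ε²]`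
are asymptotic to `σ^{−2}` as `σ → ∞`: `σ²·E[ε] → 1` and `σ²·E[ε²] → 1`. -/
theorem stmt13 :
    Tendsto (fun σ : ℝ =>
        σ ^ 2 * ∫ y, tanh (y / σ ^ 2) ∂(gaussianReal 1 (σ ^ 2).toNNReal))
      atTop (nhds 1) ∧
    Tendsto (fun σ : ℝ =>
        σ ^ 2 * ∫ y, (tanh (y / σ ^ 2)) ^ 2 ∂(gaussianReal 1 (σ ^ 2).toNNReal))
      atTop (nhds 1) := by
  refine ⟨tendsto_integral_sq_mul_tanh_sub_mul.congr integral_sq_mul_tanh_sub_mul,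
    tendsto_integral_sq_mul_tanh_sq.congr fun σ => ?_⟩
  rw [integral_const_mul,
    integral_gaussianReal_eq_integral_std 1 σ (f := fun y => tanh (y / σ ^ 2) ^ 2) (by fun_prop)]
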